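/- For n ≥ 3, the functions f_{n+1} and f_n (as defined in the paper) satisfy the recursion f_{n+1}(x_0,...,x_n) = f_n(x_0,...,x_{n-1}) ⊕ x_n² ⊕ 2·x_n²·S ⊕ x_n·(2·S)·(2 ⊕ S), where S = ⊕_{i=0}^{n-1} x_i and all arithmetic is mod 3. -/

import Mathlib

/-!
Write `Q`, `S` for the sums of the `x_i²` and the `x_i`, and `e₂`, `e₃` for the second and third
elementary symmetric sums. Since `∑_{j ≠ i} x_i² x_j = x_i² S - x_i³` and `x³ = x` in `𝔽₃`,
`f_n = Q + e₂ + 2 (Q S - S) + e₃`. Appending a variable `y` changes `Q, S, e₂, e₃` into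
`Q + y², S + y, e₂ + S y, e₃ + e₂ y`, and the resulting increment of `f_n` matches the claimed
one once `S² = Q + 2 e₂` and `3 = 0` are used.
-/

/-- The function `f_n` of the paper (Eqn. (21)). -/
def fPaper (n : ℕ) (x : Fin n → ZMod 3) : ZMod 3 :=
    ∑ i, x i ^ 2
  + ∑ i, ∑ j ∈ Finset.Ioi i, x i * x j
  + 2 * (∑ i, ∑ j ∈ Finset.univ \ {i}, x i ^ 2 * x j)
  + ∑ i, ∑ j ∈ Finset.Ioi i, ∑ k ∈ Finset.Ioi j, x i * x j * x k

open Finset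

theorem Fin.sum_Ioi_last {M : Type*} [AddCommMonoid M] {n : ℕ} (f : Fin (n + 1) → M) :
    ∑ j ∈ Ioi (Fin.last n), f j = 0 := by
  simp [← Fin.top_eq_last]

theorem Fin.sum_Ioi_castSucc {M : Type*} [AddCommMonoid M] {n : ℕ} (f : Fin (n + 1) → M)
    (i : Fin n) : ∑ j ∈ Ioi i.castSucc, f j = ∑ j ∈ Ioi i, f j.castSucc + f (Fin.last n) := by
  have hIoi : Ioi i.castSucc = Finset.cons (Fin.last n) ((Ioi i).map Fin.castSuccEmb)
      (by simp) := by
    ext j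
    induction j using Fin.lastCases with
    | last => simp [Fin.castSucc_lt_last]
    | cast k => simp [Fin.le_last]
  rw [hIoi, Finset.sum_cons, sum_map, add_comm]
  rfl

section SymmetricSums

variable {R : Type*} [CommSemiring R] {n : ℕ}

def esymm₂ (x : Fin n → R) : R :=
  ∑ i, ∑ j ∈ Ioi i, x i * x j

def esymm₃ (x : Fin n → R) : R :=
  ∑ i, ∑ j ∈ Ioi i, ∑ k ∈ Ioi j, x i * x j * x k

theorem esymm₂_castSucc (x : Fin (n + 1) → R) :
    esymm₂ x =
      esymm₂ (fun i => x i.castSucc) + (∑ i : Fin n, x i.castSucc) * x (Fin.last n) := by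
  simp only [esymm₂, Fin.sum_univ_castSucc (n := n), Fin.sum_Ioi_last, Fin.sum_Ioi_castSucc,
    add_zero, sum_add_distrib, sum_mul]

theorem esymm₃_castSucc (x : Fin (n + 1) → R) :
    esymm₃ x =
      esymm₃ (fun i => x i.castSucc) + esymm₂ (fun i => x i.castSucc) * x (Fin.last n) := by
  simp only [esymm₃, esymm₂, Fin.sum_univ_castSucc (n := n), Fin.sum_Ioi_last,
    Fin.sum_Ioi_castSucc, add_zero, sum_add_distrib, sum_mul]

theorem sq_sum_eq_sum_sq_add_two_mul_esymm₂ {R : Type*} [CommRing R] :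
    ∀ {n : ℕ} (x : Fin n → R), (∑ i, x i) ^ 2 = ∑ i, x i ^ 2 + 2 * esymm₂ x
  | 0, _ => by simp [esymm₂]
  | n + 1, x => by
    rw [esymm₂_castSucc, Fin.sum_univ_castSucc, Fin.sum_univ_castSucc (fun i => x i ^ 2)]
    linear_combination sq_sum_eq_sum_sq_add_two_mul_esymm₂ (fun i => x i.castSucc)

end SymmetricSums

theorem sum_sq_mul_sum_sdiff {R : Type*} [CommRing R] {ι : Type*} [Fintype ι] [DecidableEq ι]
    (x : ι → R) :
    ∑ i, ∑ j ∈ univ \ {i}, x i ^ 2 * x j = (∑ i, x i ^ 2) * ∑ i, x i - ∑ i, x i ^ 3 := by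
  rw [sum_mul, ← sum_sub_distrib]
  refine sum_congr rfl fun i _ => ?_
  rw [← mul_sum, sum_sdiff_eq_sub (subset_univ _), sum_singleton]
  ring

theorem fPaper_eq (n : ℕ) (x : Fin n → ZMod 3) :
    fPaper n x = ∑ i, x i ^ 2 + esymm₂ x
      + 2 * ((∑ i, x i ^ 2) * ∑ i, x i - ∑ i, x i) + esymm₃ x := by
  simp only [fPaper, sum_sq_mul_sum_sdiff, ZMod.pow_card, esymm₂, esymm₃]

theorem stmt9_general (n : ℕ) (x : Fin (n + 1) → ZMod 3) :
    fPaper (n + 1) x =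
      fPaper n (fun i => x i.castSucc)
        + x (Fin.last n) ^ 2
        + 2 * x (Fin.last n) ^ 2 * (∑ i : Fin n, x i.castSucc)
        + x (Fin.last n) * (2 * ∑ i : Fin n, x i.castSucc)
            * (2 + ∑ i : Fin n, x i.castSucc) := by
  have hsq := sq_sum_eq_sum_sq_add_two_mul_esymm₂ (fun i => x i.castSucc)
  have hcube := ZMod.pow_card (p := 3) (x (Fin.last n))
  have h3 : (3 : ZMod 3) = 0 := rfl
  rw [fPaper_eq, fPaper_eq, esymm₂_castSucc, esymm₃_castSucc, Fin.sum_univ_castSucc x,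
    Fin.sum_univ_castSucc (fun i => x i ^ 2)]
  linear_combination (-2 * x (Fin.last n)) * hsq + 2 * hcube
    - x (Fin.last n) * (esymm₂ (fun i => x i.castSucc) + ∑ i : Fin n, x i.castSucc) * h3

/-- Recursion: `f_{n+1}(x) = f_n(x₀,…,x_{n-1}) ⊕ x_n² ⊕ 2x_n²S ⊕ x_n(2S)(2 ⊕ S)`
with `S = ⊕_{i<n} x_i`, for `n ≥ 3`. -/
theorem stmt9 (n : ℕ) (hn : 3 ≤ n) (x : Fin (n + 1) → ZMod 3) :
    fPaper (n + 1) x =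
      fPaper n (fun i => x i.castSucc)
        + x (Fin.last n) ^ 2
        + 2 * x (Fin.last n) ^ 2 * (∑ i : Fin n, x i.castSucc)
        + x (Fin.last n) * (2 * ∑ i : Fin n, x i.castSucc)
            * (2 + ∑ i : Fin n, x i.castSucc) :=
  stmt9_general n x
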